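/- Let N be the Terenzi norm on ℓ¹. If u is supported on {1,…,k}, v is supported on {k+1, k+2, …}, and |v(n)|/n < N(u) for all n > k, then N(u + v) = N(u) + Σ_{n>k} (1 − 1/(n+1))|v(n)|; consequently N(u + v) < N(u) + N(v) strictly whenever v ≠ 0 and the first nonzero coordinate of v exceeds k ≥ 1. -/
import Mathlib


/-- The Terenzi norm of the truncated sequence `(a 1, …, a m)`, defined recursively. -/
noncomputable def terenzi (a : ℕ → ℝ) : ℕ → ℝ
  | 0 => 0
  | 1 => |a 1|
  | (n+2) => (1 - 1/((n:ℝ)+3)) * (|a (n+2)| + terenzi a (n+1))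
      + (1/((n:ℝ)+3)) * max (|a (n+2)| / ((n:ℝ)+2)) (terenzi a (n+1))

lemma terenzi_two (a : ℕ → ℝ) (n : ℕ) :
    terenzi a (n+2) = (1 - 1/((n:ℝ)+3)) * (|a (n+2)| + terenzi a (n+1))
      + (1/((n:ℝ)+3)) * max (|a (n+2)| / ((n:ℝ)+2)) (terenzi a (n+1)) := by
  rw [terenzi]

lemma terenzi_nonneg (a : ℕ → ℝ) : ∀ m, 0 ≤ terenzi a m
  | 0 => le_refl 0
  | 1 => abs_nonneg _
  | (n+2) => by
    rw [terenzi_two]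
    have h1 : (0:ℝ) < (n:ℝ)+3 := by positivity
    have h2 : 1/((n:ℝ)+3) ≤ 1 := by
      rw [div_le_one h1]; linarith
    have := terenzi_nonneg a (n+1)
    have habs : (0:ℝ) ≤ |a (n+2)| := abs_nonneg _
    have hm : 0 ≤ max (|a (n+2)| / ((n:ℝ)+2)) (terenzi a (n+1)) :=
      le_max_of_le_right this
    nlinarith [one_div_pos.mpr h1]

lemma terenzi_congr (a b : ℕ → ℝ) : ∀ m, (∀ n, 1 ≤ n → n ≤ m → a n = b n) →
    terenzi a m = terenzi b m
  | 0, _ => rfl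
  | 1, h => by simp [terenzi, h 1 le_rfl le_rfl]
  | (n+2), h => by
    rw [terenzi_two, terenzi_two,
      terenzi_congr a b (n+1) (fun j h1 h2 => h j h1 (by omega)),
      h (n+2) (by omega) le_rfl]

lemma terenzi_step_ge (a : ℕ → ℝ) (n : ℕ) :
    terenzi a (n+1) + (1 - 1/((n:ℝ)+3)) * |a (n+2)| ≤ terenzi a (n+2) := by
  rw [terenzi_two]
  have h1 : (0:ℝ) < (n:ℝ)+3 := by positivity
  have h2 : 1/((n:ℝ)+3) ≤ 1 := by rw [div_le_one h1]; linarith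
  have hm : terenzi a (n+1) ≤ max (|a (n+2)| / ((n:ℝ)+2)) (terenzi a (n+1)) :=
    le_max_right _ _
  nlinarith [one_div_pos.mpr h1, abs_nonneg (a (n+2))]

lemma terenzi_step_eq (a : ℕ → ℝ) (n : ℕ)
    (h : |a (n+2)| / ((n:ℝ)+2) ≤ terenzi a (n+1)) :
    terenzi a (n+2) = terenzi a (n+1) + (1 - 1/((n:ℝ)+3)) * |a (n+2)| := by
  rw [terenzi_two, max_eq_right h]
  have h1 : ((n:ℝ)+3) ≠ 0 := by positivity
  field_simp
  ring

lemma terenzi_zero (v : ℕ → ℝ) : ∀ m, (∀ n, 1 ≤ n → n ≤ m → v n = 0) →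
    terenzi v m = 0
  | 0, _ => rfl
  | 1, h => by simp [terenzi, h 1 le_rfl le_rfl]
  | (n+2), h => by
    rw [terenzi_two, terenzi_zero v (n+1) (fun j h1 h2 => h j h1 (by omega)),
      h (n+2) (by omega) le_rfl]
    simp

theorem terenzi_splitting (k : ℕ) (hk : 1 ≤ k) (u v : ℕ → ℝ)
    (hu : ∀ n, k < n → u n = 0) (hv : ∀ n, n ≤ k → v n = 0)
    (hvsum : Summable (fun n => |v n|))
    (hsmall : ∀ n, k < n → |v n| / (n:ℝ) < terenzi u k)
    (L Lv : ℝ)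
    (hL : Filter.Tendsto (terenzi (fun n => u n + v n)) Filter.atTop (nhds L))
    (hLv : Filter.Tendsto (terenzi v) Filter.atTop (nhds Lv)) :
    L = terenzi u k + ∑' n : ℕ, (if k < n then (1 - 1/((n:ℝ)+1)) * |v n| else 0) ∧
      ((∃ n, v n ≠ 0) → L < terenzi u k + Lv) := by
  set f' : ℕ → ℝ := fun n => (1 - 1/((n:ℝ)+1)) * |v n| with hf'def
  have hf'nonneg : ∀ n, 0 ≤ f' n := by
    intro n
    have h1 : (0:ℝ) < (n:ℝ)+1 := by positivity
    have h2 : 1/((n:ℝ)+1) ≤ 1 := by rw [div_le_one h1]; linarith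
    have := abs_nonneg (v n)
    simp only [hf'def]
    nlinarith
  have hf'le : ∀ n, f' n ≤ |v n| := by
    intro n
    have h1 : (0:ℝ) < (n:ℝ)+1 := by positivity
    have := abs_nonneg (v n)
    simp only [hf'def]
    nlinarith [one_div_pos.mpr h1]
  have hf'sum : Summable f' := hvsum.of_nonneg_of_le hf'nonneg hf'le
  set P : ℕ → ℝ := fun m => ∑ n ∈ Finset.range (m+1), f' n with hPdef
  have hPtend : Filter.Tendsto P Filter.atTop (nhds (∑' n, f' n)) :=
    hf'sum.hasSum.tendsto_sum_nat.comp (Filter.tendsto_add_atTop_nat 1)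
  have hPk : P k = 0 := by
    apply Finset.sum_eq_zero
    intro n hn
    simp only [hf'def]
    rw [hv n (by simp at hn; omega), abs_zero, mul_zero]
  -- key claim
  have claim1 : ∀ m, k ≤ m → terenzi (fun n => u n + v n) m = terenzi u k + P m := by
    intro m hm
    induction m, hm using Nat.le_induction with
    | base =>
      rw [hPk, add_zero]
      apply terenzi_congr
      intro n _ hn
      rw [hv n hn, add_zero]
    | succ m hm ih =>
      obtain ⟨j, rfl⟩ : ∃ j, m = j + 1 := ⟨m - 1, by omega⟩
      have hgt : k < j + 2 := by omega
      have ha : (fun n => u n + v n) (j+2) = v (j+2) := by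
        simp [hu (j+2) hgt]
      have hPnonneg : 0 ≤ P (j+1) := Finset.sum_nonneg fun n _ => hf'nonneg n
      have hsm : |(fun n => u n + v n) (j+2)| / ((j:ℝ)+2) ≤
          terenzi (fun n => u n + v n) (j+1) := by
        rw [ha, ih]
        have := hsmall (j+2) hgt
        push_cast at this
        linarith
      rw [terenzi_step_eq _ j hsm, ih]
      have hPs : P (j+2) = P (j+1) + f' (j+2) := Finset.sum_range_succ f' (j+2)
      have hfeq : f' (j+2) = (1 - 1/((j:ℝ)+3)) * |(fun n => u n + v n) (j+2)| := by
        rw [ha]; simp only [hf'def]; push_cast; ring_nf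
      rw [hPs, hfeq]; ring
  have hL' : Filter.Tendsto (terenzi (fun n => u n + v n)) Filter.atTop
      (nhds (terenzi u k + ∑' n, f' n)) := by
    apply Filter.Tendsto.congr' _ (tendsto_const_nhds.add hPtend)
    filter_upwards [Filter.eventually_ge_atTop k] with m hm
    exact (claim1 m hm).symm
  have hLeq : L = terenzi u k + ∑' n, f' n := tendsto_nhds_unique hL hL'
  have htsum_eq : (∑' n : ℕ, (if k < n then (1 - 1/((n:ℝ)+1)) * |v n| else 0))
      = ∑' n, f' n := by
    apply tsum_congr
    intro n
    by_cases h : k < n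
    · simp [h, hf'def]
    · simp only [h, if_false, hf'def]
      rw [hv n (by omega), abs_zero, mul_zero]
  constructor
  · rw [htsum_eq]; exact hLeq
  · rintro ⟨n₁, hn₁⟩
    have hex : ∃ n, v n ≠ 0 := ⟨n₁, hn₁⟩
    set n₀ := Nat.find hex with hn₀def
    have hv0 : v n₀ ≠ 0 := Nat.find_spec hex
    have hmin : ∀ j, j < n₀ → v j = 0 := fun j hj => by
      by_contra h; exact Nat.find_min hex hj h
    have hn₀k : k < n₀ := by
      by_contra h; exact hv0 (hv n₀ (by omega))
    obtain ⟨j, hj⟩ : ∃ j, n₀ = j + 2 := ⟨n₀ - 2, by omega⟩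
    have hTprev : terenzi v (j+1) = 0 :=
      terenzi_zero v (j+1) (fun n _ hn => hmin n (by omega))
    have habspos : 0 < |v n₀| := abs_pos.mpr hv0
    set ε : ℝ := (1/((j:ℝ)+3)) * (|v (j+2)| / ((j:ℝ)+2)) with hεdef
    have hεpos : 0 < ε := by
      rw [hεdef]
      have : 0 < |v (j+2)| := hj ▸ habspos
      positivity
    have hTn₀ : terenzi v (j+2) = (1 - 1/((j:ℝ)+3)) * |v (j+2)| + ε := by
      rw [terenzi_two, hTprev]
      rw [max_eq_left (by positivity)]
      rw [hεdef]; ring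
    have hPn₀ : P (j+2) = (1 - 1/((j:ℝ)+3)) * |v (j+2)| := by
      rw [show P (j+2) = ∑ n ∈ Finset.range (j+2), f' n + f' (j+2) from
        Finset.sum_range_succ f' (j+2)]
      have : ∑ n ∈ Finset.range (j+2), f' n = 0 := by
        apply Finset.sum_eq_zero
        intro n hn
        simp only [hf'def]
        rw [hmin n (by simp at hn; omega), abs_zero, mul_zero]
      rw [this, zero_add]
      simp only [hf'def]
      push_cast
      ring_nf
    have claim2 : ∀ m, n₀ ≤ m → ε + P m ≤ terenzi v m := by
      intro m hm
      induction m, hm using Nat.le_induction with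
      | base => rw [hj, hTn₀, hPn₀]; linarith
      | succ m hm ih =>
        obtain ⟨i, rfl⟩ : ∃ i, m = i + 1 := ⟨m - 1, by omega⟩
        have hstep := terenzi_step_ge v i
        have hPs : P (i+2) = P (i+1) + f' (i+2) := Finset.sum_range_succ f' (i+2)
        have hfeq : f' (i+2) = (1 - 1/((i:ℝ)+3)) * |v (i+2)| := by
          simp only [hf'def]; push_cast; ring_nf
        rw [hPs, hfeq]
        linarith
    have hLv' : ε + ∑' n, f' n ≤ Lv := by
      apply le_of_tendsto_of_tendsto (tendsto_const_nhds.add hPtend) hLv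
      filter_upwards [Filter.eventually_ge_atTop n₀] with m hm
      exact claim2 m hm
    rw [hLeq]
    linarith
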